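/- An operator A on L²(ℝ) lies in Alg(N_v) ∩ Alg(N_v)* (the diagonal of the Volterra nest algebra) if and only if A = M_φ for some φ ∈ L^∞(ℝ). -/

import Mathlib

open MeasureTheory Complex Filter Set

noncomputable section

abbrev L2 : Type := Lp ℂ 2 (volume : Measure ℝ)

/-- Member `L²([t,∞))` of the Volterra nest. -/
def Nv (t : ℝ) : Set L2 := {f : L2 | ∀ᵐ x : ℝ ∂volume, x < t → f x = 0}

/-!
Write `L²(s)` for the functions vanishing a.e. off `s` (`vanishingOn μ sᶜ` below). Since `L²(s)` and
`L²(sᶜ)` are orthogonal complements, an operator preserving `L²(s)` has an adjoint preserving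
`L²(sᶜ)`. So an operator `A` in the diagonal preserves both `L²([t, ∞))` and `L²((-∞, t))`, i.e.
commutes with multiplication by `1_{(-∞, t)}`. Fix `g ∈ L²` vanishing nowhere and put
`φ = A g / g`; then `A` agrees with multiplication by `φ` on `g` and on every `1_{(-∞, t)} g`.
A function `h` orthogonal to all of these makes `ḡ h` integrate to zero over a generating
π-system, so `h = 0` and these vectors span a dense subspace. The set where `A` agrees with
multiplication by `φ` is a closed subspace (L²-convergence gives a.e.-convergence along a
subsequence), hence everything. Testing `A` on indicators of sets of finite measure gives
`|φ| ≤ ‖A‖` a.e. Conversely, multiplication by `φ` preserves every `L²(s)`, so its adjoint does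
as well.
-/

open scoped InnerProductSpace

theorem MeasureTheory.Integrable.ae_eq_zero_of_forall_setIntegral_eq_zero_of_isPiSystem
    {α E : Type*} {m : MeasurableSpace α} {μ : Measure α} [NormedAddCommGroup E]
    [NormedSpace ℝ E] [CompleteSpace E] {S : Set (Set α)} (h_eq : m = .generateFrom S)
    (h_pi : IsPiSystem S) {f : α → E} (hf : Integrable f μ) (h_univ : ∫ x, f x ∂μ = 0)
    (hS : ∀ s ∈ S, ∫ x in s, f x ∂μ = 0) : f =ᵐ[μ] 0 := by
  suffices ∀ s, MeasurableSet s → ∫ x in s, f x ∂μ = 0 from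
    hf.ae_eq_zero_of_forall_setIntegral_eq_zero fun s hs _ ↦ this s hs
  intro s hs
  induction s, hs using MeasurableSpace.induction_on_inter h_eq h_pi with
  | empty => simp
  | basic s hs => exact hS s hs
  | compl s hs ih => rwa [← integral_add_compl hs hf, ih, zero_add] at h_univ
  | iUnion s hdisj hs ih => simp [integral_iUnion hs hdisj hf.integrableOn, ih]

namespace NestAlgebra

variable {α 𝕜 : Type*} [RCLike 𝕜] {m : MeasurableSpace α} {μ : Measure α} {s : Set α}

variable (μ) in
def vanishingOn (s : Set α) : Set (Lp 𝕜 2 μ) := {f | ∀ᵐ x ∂μ, x ∈ s → f x = 0}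

def indicatorL2 (hs : MeasurableSet s) (f : Lp 𝕜 2 μ) : Lp 𝕜 2 μ :=
  ((Lp.memLp f).indicator hs).toLp _

lemma coeFn_indicatorL2 (hs : MeasurableSet s) (f : Lp 𝕜 2 μ) :
    ⇑(indicatorL2 hs f) =ᵐ[μ] s.indicator f :=
  MemLp.coeFn_toLp _

lemma indicatorL2_mem_vanishingOn_compl (hs : MeasurableSet s) (f : Lp 𝕜 2 μ) :
    indicatorL2 hs f ∈ vanishingOn μ sᶜ := by
  filter_upwards [coeFn_indicatorL2 hs f] with x hx hxs
  rw [hx, indicator_of_notMem hxs]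

lemma sub_indicatorL2_mem_vanishingOn (hs : MeasurableSet s) (f : Lp 𝕜 2 μ) :
    f - indicatorL2 hs f ∈ vanishingOn μ s := by
  filter_upwards [coeFn_indicatorL2 hs f, Lp.coeFn_sub f (indicatorL2 hs f)] with x hx hsub hxs
  rw [hsub, Pi.sub_apply, hx, indicator_of_mem hxs, sub_self]

lemma eq_indicatorL2_of_mem_vanishingOn (hs : MeasurableSet s) {f v : Lp 𝕜 2 μ}
    (hv : v ∈ vanishingOn μ sᶜ) (hfv : f - v ∈ vanishingOn μ s) : v = indicatorL2 hs f := by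
  refine Lp.ext ?_
  filter_upwards [hv, hfv, coeFn_indicatorL2 hs f, Lp.coeFn_sub f v] with x hvx hfvx hx hsub
  rw [hx]
  by_cases hxs : x ∈ s
  · rw [indicator_of_mem hxs, eq_comm, ← sub_eq_zero, ← Pi.sub_apply, ← hsub, hfvx hxs]
  · rw [indicator_of_notMem hxs, hvx hxs]

lemma inner_eq_zero_of_mem_vanishingOn {f g : Lp 𝕜 2 μ} (hf : f ∈ vanishingOn μ sᶜ)
    (hg : g ∈ vanishingOn μ s) : ⟪f, g⟫_𝕜 = 0 := by
  rw [L2.inner_def, ← integral_zero α 𝕜]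
  refine integral_congr_ae ?_
  filter_upwards [hf, hg] with x hfx hgx
  by_cases hxs : x ∈ s
  · simp [hgx hxs]
  · simp [hfx hxs]

lemma inner_indicatorL2_self (hs : MeasurableSet s) (f : Lp 𝕜 2 μ) :
    ⟪indicatorL2 hs f, f⟫_𝕜 = ⟪indicatorL2 hs f, indicatorL2 hs f⟫_𝕜 := by
  rw [← sub_eq_zero, ← inner_sub_right]
  exact inner_eq_zero_of_mem_vanishingOn (indicatorL2_mem_vanishingOn_compl hs f)
    (sub_indicatorL2_mem_vanishingOn hs f)

lemma mapsTo_adjoint_vanishingOn_compl (hs : MeasurableSet s) {B : Lp 𝕜 2 μ →L[𝕜] Lp 𝕜 2 μ}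
    (hB : MapsTo B (vanishingOn μ s) (vanishingOn μ s)) :
    MapsTo B.adjoint (vanishingOn μ sᶜ) (vanishingOn μ sᶜ) := by
  intro f hf
  set v := indicatorL2 hs.compl (B.adjoint f) with hv_def
  have hv : v ∈ vanishingOn μ s := by
    simpa only [compl_compl] using indicatorL2_mem_vanishingOn_compl hs.compl (B.adjoint f)
  have hv_zero : v = 0 := by
    -- `⟪v, v⟫ = ⟪B† f, v⟫ = ⟪f, B v⟫ = 0`
    rw [← inner_self_eq_zero (𝕜 := 𝕜), ← inner_indicatorL2_self, ← inner_conj_symm,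
      ContinuousLinearMap.adjoint_inner_left, inner_eq_zero_of_mem_vanishingOn hf (hB hv),
      map_zero]
  have h := sub_indicatorL2_mem_vanishingOn hs.compl (B.adjoint f)
  rwa [← hv_def, hv_zero, sub_zero] at h

lemma map_indicatorL2 (hs : MeasurableSet s) {A : Lp 𝕜 2 μ →L[𝕜] Lp 𝕜 2 μ}
    (hA : MapsTo A (vanishingOn μ s) (vanishingOn μ s))
    (hA' : MapsTo A (vanishingOn μ sᶜ) (vanishingOn μ sᶜ)) (f : Lp 𝕜 2 μ) :
    A (indicatorL2 hs f) = indicatorL2 hs (A f) :=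
  eq_indicatorL2_of_mem_vanishingOn hs (hA' (indicatorL2_mem_vanishingOn_compl hs f))
    (by simpa only [map_sub] using hA (sub_indicatorL2_mem_vanishingOn hs f))

lemma mapsTo_vanishingOn_of_ae_eq_mul {A : Lp 𝕜 2 μ →L[𝕜] Lp 𝕜 2 μ} {φ : α → 𝕜}
    (hA : ∀ f, ⇑(A f) =ᵐ[μ] fun x ↦ φ x * f x) (s : Set α) :
    MapsTo A (vanishingOn μ s) (vanishingOn μ s) := by
  intro f hf
  change ∀ᵐ x ∂μ, x ∈ s → A f x = 0
  filter_upwards [hA f, hf] with x hAx hfx hxs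
  rw [hAx, hfx hxs, mul_zero]

/-- Analogue of `LinearMap.eqLocus A M_φ`; for unbounded `φ` there is no operator `M_φ`. -/
def eqMulLocus (A : Lp 𝕜 2 μ →L[𝕜] Lp 𝕜 2 μ) (φ : α → 𝕜) : Submodule 𝕜 (Lp 𝕜 2 μ) where
  carrier := {f | ⇑(A f) =ᵐ[μ] fun x ↦ φ x * f x}
  add_mem' {f g} hf hg := by
    filter_upwards [hf, hg, Lp.coeFn_add f g, Lp.coeFn_add (A f) (A g)] with x hfx hgx hfg hAfg
    simp only [map_add, hAfg, Pi.add_apply, hfx, hgx, hfg, mul_add]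
  zero_mem' := by
    filter_upwards [Lp.coeFn_zero 𝕜 2 μ, (Lp.coeFn_zero 𝕜 2 μ).symm] with x h0 h0'
    simp only [map_zero, h0, Pi.zero_apply, mul_zero]
  smul_mem' c f hf := by
    filter_upwards [hf, Lp.coeFn_smul c f, Lp.coeFn_smul c (A f)] with x hfx hcf hcAf
    simp only [map_smul, hcAf, hcf, Pi.smul_apply, hfx, smul_eq_mul]
    ring

lemma isClosed_eqMulLocus (A : Lp 𝕜 2 μ →L[𝕜] Lp 𝕜 2 μ) (φ : α → 𝕜) :
    IsClosed (eqMulLocus A φ : Set (Lp 𝕜 2 μ)) := by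
  refine IsSeqClosed.isClosed fun u f hu hlim ↦ ?_
  obtain ⟨ns, hns, hu_ae⟩ := (tendstoInMeasure_of_tendsto_Lp hlim).exists_seq_tendsto_ae
  have hAu : Tendsto (fun n ↦ A (u (ns n))) atTop (nhds (A f)) :=
    (A.continuous.tendsto f).comp (hlim.comp hns.tendsto_atTop)
  obtain ⟨ms, hms, hAu_ae⟩ := (tendstoInMeasure_of_tendsto_Lp hAu).exists_seq_tendsto_ae
  filter_upwards [hu_ae, hAu_ae, ae_all_iff.2 hu] with x hux hAux hmul
  refine tendsto_nhds_unique hAux ?_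
  simp only [hmul]
  exact (hux.comp hms.tendsto_atTop).const_mul (φ x)

lemma eqMulLocus_eq_top {A : Lp 𝕜 2 μ →L[𝕜] Lp 𝕜 2 μ} {φ : α → 𝕜} {K : Submodule 𝕜 (Lp 𝕜 2 μ)}
    (hK : Kᗮ = ⊥) (hKA : K ≤ eqMulLocus A φ) : eqMulLocus A φ = ⊤ := by
  rw [eq_top_iff, ← Submodule.topologicalClosure_eq_top_iff.2 hK]
  exact K.topologicalClosure_minimal hKA (isClosed_eqMulLocus A φ)

lemma inner_indicatorL2_left (hs : MeasurableSet s) (f g : Lp 𝕜 2 μ) :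
    ⟪indicatorL2 hs f, g⟫_𝕜 = ∫ x in s, ⟪f x, g x⟫_𝕜 ∂μ := by
  rw [L2.inner_def, ← integral_indicator hs]
  refine integral_congr_ae ?_
  filter_upwards [coeFn_indicatorL2 hs f] with x hx
  by_cases hxs : x ∈ s <;> simp [hx, hxs]

lemma eq_zero_of_forall_inner_indicatorL2_eq_zero {S : Set (Set α)} (h_eq : m = .generateFrom S)
    (h_pi : IsPiSystem S) {g h : Lp 𝕜 2 μ} (hg : ∀ᵐ x ∂μ, g x ≠ 0) (hgh : ⟪g, h⟫_𝕜 = 0)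
    (hS : ∀ s (hs : MeasurableSet s), s ∈ S → ⟪indicatorL2 hs g, h⟫_𝕜 = 0) : h = 0 := by
  have hgh_ae :=
    (L2.integrable_inner (𝕜 := 𝕜) g h).ae_eq_zero_of_forall_setIntegral_eq_zero_of_isPiSystem
      h_eq h_pi (by rwa [← L2.inner_def]) fun s hsS ↦ by
        have hs : MeasurableSet s := h_eq ▸ MeasurableSpace.measurableSet_generateFrom hsS
        rw [← inner_indicatorL2_left hs, hS s hs hsS]
  refine Lp.ext ?_
  filter_upwards [hgh_ae, hg, Lp.coeFn_zero 𝕜 2 μ] with x hx hgx h0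
  rw [h0]
  simpa [hgx] using hx

lemma exists_ae_ne_zero [SigmaFinite μ] : ∃ g : Lp 𝕜 2 μ, ∀ᵐ x ∂μ, g x ≠ 0 := by
  obtain ⟨w, hw_pos, hw_meas, hw_lt⟩ := exists_pos_lintegral_lt_of_sigmaFinite μ one_ne_zero
  have hw_int : Integrable (fun x ↦ (w x : ℝ)) μ :=
    ⟨hw_meas.coe_nnreal_real.aestronglyMeasurable,
      hasFiniteIntegral_iff_ofNNReal.2 (hw_lt.trans ENNReal.one_lt_top)⟩
  have hv : MemLp (fun x ↦ ((NNReal.sqrt (w x) : ℝ) : 𝕜)) 2 μ := by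
    refine (memLp_two_iff_integrable_sq_norm ?_).2 (hw_int.congr (Eventually.of_forall fun x ↦ ?_))
    · fun_prop
    · simp
  refine ⟨hv.toLp _, ?_⟩
  filter_upwards [hv.coeFn_toLp] with x hx
  rw [hx]
  simp [(hw_pos x).ne']

theorem exists_ae_eq_mul_of_commute_indicatorL2 [SigmaFinite μ] {S : Set (Set α)}
    (h_eq : m = .generateFrom S) (h_pi : IsPiSystem S) (A : Lp 𝕜 2 μ →L[𝕜] Lp 𝕜 2 μ)
    (hA : ∀ s (hs : MeasurableSet s), s ∈ S → ∀ f, A (indicatorL2 hs f) = indicatorL2 hs (A f)) :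
    ∃ φ : α → 𝕜, AEStronglyMeasurable φ μ ∧ ∀ f, ⇑(A f) =ᵐ[μ] fun x ↦ φ x * f x := by
  obtain ⟨g, hg⟩ := exists_ae_ne_zero (𝕜 := 𝕜) (μ := μ)
  set φ : α → 𝕜 := fun x ↦ A g x / g x
  have hφ : AEStronglyMeasurable φ μ :=
    ((Lp.aestronglyMeasurable _).aemeasurable.div
      (Lp.aestronglyMeasurable _).aemeasurable).aestronglyMeasurable
  have hg_mem : g ∈ eqMulLocus A φ := by
    filter_upwards [hg] with x hx
    simp [φ, div_mul_cancel₀ _ hx]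
  have hind_mem : ∀ s (hs : MeasurableSet s), s ∈ S → indicatorL2 hs g ∈ eqMulLocus A φ := by
    intro s hs hsS
    change ⇑(A _) =ᵐ[μ] _
    rw [hA s hs hsS]
    filter_upwards [coeFn_indicatorL2 hs (A g), coeFn_indicatorL2 hs g, hg_mem] with x h1 h2 h3
    by_cases hxs : x ∈ s <;> simp [h1, h2, h3, hxs]
  set K := Submodule.span 𝕜
    (insert g {v | ∃ (s : Set α) (hs : MeasurableSet s), s ∈ S ∧ indicatorL2 hs g = v})
  have hK : Kᗮ = ⊥ := by
    refine (Submodule.eq_bot_iff _).2 fun h hh ↦ ?_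
    refine eq_zero_of_forall_inner_indicatorL2_eq_zero h_eq h_pi hg
      ((Submodule.mem_orthogonal _ h).1 hh g (Submodule.subset_span (mem_insert _ _)))
      fun s hs hsS ↦ ?_
    exact (Submodule.mem_orthogonal _ h).1 hh _
      (Submodule.subset_span (mem_insert_of_mem _ ⟨s, hs, hsS, rfl⟩))
  have hKA : K ≤ eqMulLocus A φ := by
    refine Submodule.span_le.2 (insert_subset hg_mem ?_)
    rintro _ ⟨s, hs, hsS, rfl⟩
    exact hind_mem s hs hsS
  exact ⟨φ, hφ, Submodule.eq_top_iff'.1 (eqMulLocus_eq_top hK hKA)⟩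

lemma ae_norm_le_opNorm_of_ae_eq_mul [SigmaFinite μ] {A : Lp 𝕜 2 μ →L[𝕜] Lp 𝕜 2 μ}
    {φ : α → 𝕜} (hφ : AEStronglyMeasurable φ μ) (hA : ∀ f, ⇑(A f) =ᵐ[μ] fun x ↦ φ x * f x) :
    ∀ᵐ x ∂μ, ‖φ x‖ ≤ ‖A‖ := by
  have hsq : (fun x ↦ ‖φ x‖ₑ ^ (2 : ℝ)) ≤ᵐ[μ] fun _ ↦ ‖A‖ₑ ^ (2 : ℝ) := by
    refine ae_le_of_forall_setLIntegral_le_of_sigmaFinite₀ (hφ.enorm.pow_const _)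
      fun s hs hμs ↦ ?_
    have he := indicatorConstLp_coeFn (p := 2) (hs := hs) (hμs := hμs.ne) (c := (1 : 𝕜))
    set e : Lp 𝕜 2 μ := indicatorConstLp 2 hs hμs.ne 1
    have hAe : ‖A e‖ₑ = eLpNorm φ 2 (μ.restrict s) := by
      rw [Lp.enorm_def, ← eLpNorm_indicator_eq_eLpNorm_restrict hs]
      refine eLpNorm_congr_ae ?_
      filter_upwards [hA e, he] with x hAx hex
      by_cases hxs : x ∈ s <;> simp [hAx, hex, hxs]
    have hle : eLpNorm φ 2 (μ.restrict s) ≤ ‖A‖ₑ * μ s ^ (1 / 2 : ℝ) := by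
      calc eLpNorm φ 2 (μ.restrict s) = ‖A e‖ₑ := hAe.symm
        _ ≤ ‖A‖ₑ * ‖e‖ₑ := A.le_opENorm e
        _ ≤ ‖A‖ₑ * μ s ^ (1 / 2 : ℝ) := by
          gcongr
          simpa using enorm_indicatorConstLp_le (p := 2) (hs := hs) (hμs := hμs.ne) (c := (1 : 𝕜))
    calc ∫⁻ x in s, ‖φ x‖ₑ ^ (2 : ℝ) ∂μ = eLpNorm φ 2 (μ.restrict s) ^ (2 : ℝ) := by
          simpa using (eLpNorm_nnreal_pow_eq_lintegral (f := φ) (μ := μ.restrict s) (p := 2)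
            two_ne_zero).symm
      _ ≤ (‖A‖ₑ * μ s ^ (1 / 2 : ℝ)) ^ (2 : ℝ) := by gcongr
      _ = ∫⁻ _ in s, ‖A‖ₑ ^ (2 : ℝ) ∂μ := by
          rw [setLIntegral_const, ENNReal.mul_rpow_of_nonneg _ _ zero_le_two, ← ENNReal.rpow_mul]
          norm_num
  filter_upwards [hsq] with x hx
  exact enorm_le_iff_norm_le.1 ((ENNReal.rpow_le_rpow_iff two_pos).1 hx)

end NestAlgebra

open NestAlgebra in
/-- An operator `A` on `L²(ℝ)` lies in the diagonal `Alg(N_v) ∩ Alg(N_v)*` of the Volterra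
nest algebra if and only if `A = M_φ` for some `φ ∈ L^∞(ℝ)`. -/
theorem volterra_diagonal_is_multiplication (A : L2 →L[ℂ] L2) :
    (∀ t : ℝ, (∀ f ∈ Nv t, A f ∈ Nv t) ∧
      (∀ f ∈ Nv t, (ContinuousLinearMap.adjoint A) f ∈ Nv t)) ↔
    ∃ φ : ℝ → ℂ, AEStronglyMeasurable φ volume ∧ (∃ C : ℝ, ∀ᵐ x : ℝ ∂volume, ‖φ x‖ ≤ C) ∧
      ∀ f : L2, ⇑(A f) =ᵐ[volume] fun x : ℝ => φ x * f x := by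
  -- `Nv t` is `vanishingOn volume (Iio t)` by definition.
  constructor
  · intro H
    have hcomm : ∀ s (hs : MeasurableSet s), s ∈ range Iio →
        ∀ f, A (indicatorL2 hs f) = indicatorL2 hs (A f) := by
      rintro _ hs ⟨t, rfl⟩ f
      have hA' := mapsTo_adjoint_vanishingOn_compl hs fun f hf ↦ (H t).2 f hf
      rw [ContinuousLinearMap.adjoint_adjoint] at hA'
      exact map_indicatorL2 hs (fun f hf ↦ (H t).1 f hf) hA' f
    obtain ⟨φ, hφ, hAφ⟩ :=
      exists_ae_eq_mul_of_commute_indicatorL2 (borel_eq_generateFrom_Iio ℝ) isPiSystem_Iio A hcomm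
    exact ⟨φ, hφ, ⟨‖A‖, ae_norm_le_opNorm_of_ae_eq_mul hφ hAφ⟩, hAφ⟩
  · rintro ⟨φ, -, -, hAφ⟩ t
    have hA := mapsTo_vanishingOn_of_ae_eq_mul hAφ
    refine ⟨fun f hf ↦ hA (Iio t) hf, fun f hf ↦ ?_⟩
    have hA' := mapsTo_adjoint_vanishingOn_compl measurableSet_Ici (hA (Ici t))
    rw [compl_Ici] at hA'
    exact hA' hf
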